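/- arXiv:2311.16902 — 4 statements merged into one kernel-verified Lean document; each statement's English description precedes it below -/
import Mathlib

section
/- Let a, a⋆, b, b⋆, R, R⋆, E ∈ ℂ with a ≠ 0, a⋆ ≠ 0, E ≠ 0, 1 + R⋆R ≠ 0, a + bR⋆ ≠ 0, a⋆ + b⋆R ≠ 0, and suppose a·a⋆ + b·b⋆ = 1, E²b⋆R² + (E²a⋆ − a)R + b = 0, and E⁻²bR⋆² + (E⁻²a − a⋆)R⋆ + b⋆ = 0. Then the 2×2 matrix factorization identity holds: [[1, −(R − b/a)],[0, 1]] · diag(1/a, a) · [[1, 0],[−E⁻²R⋆ − b⋆/a, 1]] = [[1, 0],[−R⋆/(1 + R⋆R), 1]] · diag((1 + R⋆R)/(a + bR⋆), (a + bR⋆)/(1 + R⋆R)) · [[1, −E²R/(1 + R⋆R)],[0, 1]]. -/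
/-!
Multiplying the two global relations and using `a a⋆ + b b⋆ = 1` forces
`(a + b R⋆)(a⋆ + b⋆ R) = 1` as soon as `1 + R⋆ R ≠ 0`. With this, the relations take the
forms `E² R = (a R - b)(a + b R⋆)` and `(a R⋆ + E² b⋆)(a + b R⋆) = E² R⋆`, and comparing the
four entries of the two triangular products reduces to these two identities.
-/

open Matrix

theorem Matrix.upper_mul_diag_mul_lower_eq_lower_mul_diag_mul_upper_iff {α : Type*} [Semiring α]
    (x d d' y l e e' u : α) :
    !![1, x; 0, 1] * !![d, 0; 0, d'] * !![1, 0; y, 1]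
        = !![1, 0; l, 1] * !![e, 0; 0, e'] * !![1, u; 0, 1] ↔
      d + x * d' * y = e ∧ x * d' = e * u ∧ d' * y = l * e ∧ d' = l * e * u + e' := by
  simp [and_assoc]

section GlobalRelation

variable {K : Type*} [Field K] {a as b bs R Rs E : K}

theorem add_mul_mul_eq_sq_mul_of_global_relation (hE : E ≠ 0)
    (hq2 : (E ^ 2)⁻¹ * b * Rs ^ 2 + ((E ^ 2)⁻¹ * a - as) * Rs + bs = 0) :
    (a + b * Rs) * Rs = E ^ 2 * (as * Rs - bs) := by
  linear_combination E ^ 2 * hq2 - (a * Rs + b * Rs ^ 2) * mul_inv_cancel₀ (pow_ne_zero 2 hE)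

theorem mul_eq_one_of_global_relations (hE : E ≠ 0) (hR : 1 + Rs * R ≠ 0)
    (hdet : a * as + b * bs = 1)
    (hq1 : E ^ 2 * bs * R ^ 2 + (E ^ 2 * as - a) * R + b = 0)
    (hq2 : (E ^ 2)⁻¹ * b * Rs ^ 2 + ((E ^ 2)⁻¹ * a - as) * Rs + bs = 0) :
    (a + b * Rs) * (as + bs * R) = 1 := by
  have h1 : E ^ 2 * ((as + bs * R) * R) = a * R - b := by linear_combination hq1
  have h2 := add_mul_mul_eq_sq_mul_of_global_relation hE hq2
  have h3 : (a + b * Rs) * (as + bs * R) * (R * Rs) = (a * R - b) * (as * Rs - bs) :=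
    mul_left_cancel₀ (pow_ne_zero 2 hE)
      (by linear_combination (a + b * Rs) * Rs * h1 + (a * R - b) * h2)
  -- given `h3`, `(a + b Rs)(as + bs R)(1 + Rs R) = (a as + b bs)(1 + Rs R)` is a ring identity
  refine mul_right_cancel₀ hR ?_
  linear_combination h3 + (1 + R * Rs) * hdet

end GlobalRelation

theorem triangular_factorization_imaginary_axis_general (a as b bs R Rs E : ℂ)
    (ha : a ≠ 0) (hE : E ≠ 0)
    (hR : 1 + Rs * R ≠ 0) (habR : a + b * Rs ≠ 0)
    (hdet : a * as + b * bs = 1)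
    (hq1 : E ^ 2 * bs * R ^ 2 + (E ^ 2 * as - a) * R + b = 0)
    (hq2 : (E ^ 2)⁻¹ * b * Rs ^ 2 + ((E ^ 2)⁻¹ * a - as) * Rs + bs = 0) :
    !![1, -(R - b / a); 0, 1]
        * !![1 / a, 0; 0, a]
        * !![1, 0; -(E ^ 2)⁻¹ * Rs - bs / a, 1]
      = !![1, 0; -Rs / (1 + Rs * R), 1]
        * !![(1 + Rs * R) / (a + b * Rs), 0; 0, (a + b * Rs) / (1 + Rs * R)]
        * !![1, -E ^ 2 * R / (1 + Rs * R); 0, 1] := by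
  have hk := mul_eq_one_of_global_relations hE hR hdet hq1 hq2
  have hA : E ^ 2 * R = (a * R - b) * (a + b * Rs) := by
    linear_combination (a + b * Rs) * hq1 - E ^ 2 * R * hk
  have hB : (a * Rs + E ^ 2 * bs) * (a + b * Rs) = E ^ 2 * Rs := by
    linear_combination a * add_mul_mul_eq_sq_mul_of_global_relation hE hq2 + E ^ 2 * Rs * hdet
  have hR' : 1 + R * Rs ≠ 0 := by rwa [mul_comm]
  have habR' : a + Rs * b ≠ 0 := by rwa [mul_comm]
  rw [upper_mul_diag_mul_lower_eq_lower_mul_diag_mul_upper_iff]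
  refine ⟨?_, ?_, ?_, ?_⟩ <;> field_simp
  · linear_combination (a * R - b) * hB
  · linear_combination hA
  · linear_combination -hB
  · linear_combination -Rs * hA

/-- Triangular factorization of the jump matrix `J₀` on `iℝ₊` (Proposition 4.6):
`[[1, −G₂],[0, 1]] · diag(1/a, a) · [[1, 0],[G, 1]]
  = [[1, 0],[−L, 1]] · diag(D₃, D₃⁻¹) · [[1, U],[0, 1]]`. -/
theorem triangular_factorization_imaginary_axis (a as b bs R Rs E : ℂ)
    (ha : a ≠ 0) (has : as ≠ 0) (hE : E ≠ 0)
    (hR : 1 + Rs * R ≠ 0) (habR : a + b * Rs ≠ 0) (hasR : as + bs * R ≠ 0)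
    (hdet : a * as + b * bs = 1)
    (hq1 : E ^ 2 * bs * R ^ 2 + (E ^ 2 * as - a) * R + b = 0)
    (hq2 : (E ^ 2)⁻¹ * b * Rs ^ 2 + ((E ^ 2)⁻¹ * a - as) * Rs + bs = 0) :
    !![1, -(R - b / a); 0, 1]
        * !![1 / a, 0; 0, a]
        * !![1, 0; -(E ^ 2)⁻¹ * Rs - bs / a, 1]
      = !![1, 0; -Rs / (1 + Rs * R), 1]
        * !![(1 + Rs * R) / (a + b * Rs), 0; 0, (a + b * Rs) / (1 + Rs * R)]
        * !![1, -E ^ 2 * R / (1 + Rs * R); 0, 1] :=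
  triangular_factorization_imaginary_axis_general a as b bs R Rs E ha hE hR habR hdet hq1 hq2
end

section
/- Let R⁺, R⁻, R⋆⁺, R⋆⁻ ∈ ℂ satisfy 1 + R⁺·R⋆⁻ = 0 and 1 + R⁻·R⋆⁺ = 0, and suppose 1 + R⋆⁺R⁺ ≠ 0 and 1 + R⋆⁻R⁻ ≠ 0. Then R⁺ ≠ R⁻ and the 2×2 matrix product [[1, 0],[R⋆⁻/(1 + R⋆⁻R⁻), 1]] · [[1, R⁺ − R⁻],[0, 1]] · [[1, 0],[−R⋆⁺/(1 + R⋆⁺R⁺), 1]] equals [[0, R⁺ − R⁻],[1/(R⁻ − R⁺), 0]]. -/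
/-!
Writing `a`, `b` for the two lower-triangular entries and `d = R⁺ - R⁻`, the product
`[[1,0],[a,1]] · [[1,d],[0,1]] · [[1,0],[b,1]]` equals `[[1 + d b, d],[a + (1 + a d) b, 1 + a d]]`,
which is `[[0, d],[a, 0]]` as soon as `a d = b d = -1`. The relations `1 + R⁺R⋆⁻ = 0 = 1 + R⁻R⋆⁺`
give `(1 + R⋆⁻R⁻) R⁺ = R⁺ - R⁻` and `(1 + R⋆⁺R⁺) R⁻ = R⁻ - R⁺`, so both `a` and `b` equal
`1 / (R⁻ - R⁺)`, and the nonvanishing of `1 + R⋆⁺R⁺` forces `R⁺ ≠ R⁻`.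
-/

open Matrix

theorem lowerUnitriangular_mul_upper_mul_lower_eq {R : Type*} [CommRing R] {a b d : R}
    (ha : a * d = -1) (hb : b * d = -1) :
    !![1, 0; a, 1] * !![1, d; 0, 1] * !![1, 0; b, 1] = !![0, d; a, 0] := by
  have had : a * d + 1 = 0 := by linear_combination ha
  have hdb : 1 + d * b = 0 := by linear_combination hb
  simp [had, hdb]

section GlobalRelation

variable {K : Type*} [Field K] {x y z : K}

theorem one_add_mul_mul_eq_sub (hxy : 1 + x * y = 0) : (1 + y * z) * x = x - z := by
  linear_combination z * hxy

theorem sub_ne_zero_of_one_add_mul_eq_zero (hxy : 1 + x * y = 0) (h : 1 + y * z ≠ 0) :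
    x - z ≠ 0 := by
  have hx : x ≠ 0 := by
    rintro rfl
    simp at hxy
  rw [← one_add_mul_mul_eq_sub hxy]
  exact mul_ne_zero h hx

theorem div_one_add_mul_eq_one_div_sub (hxy : 1 + x * y = 0) (h : 1 + y * z ≠ 0) :
    y / (1 + y * z) = 1 / (z - x) := by
  have hzx : z - x ≠ 0 := by
    rw [← neg_sub]
    exact neg_ne_zero.mpr (sub_ne_zero_of_one_add_mul_eq_zero hxy h)
  rw [div_eq_div_iff h hzx]
  linear_combination -hxy

end GlobalRelation

/-- If `1 + R⁺R⋆⁻ = 0 = 1 + R⁻R⋆⁺` with `1 + R⋆⁺R⁺ ≠ 0 ≠ 1 + R⋆⁻R⁻`, then `R⁺ ≠ R⁻` and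
`[[1, 0],[R⋆⁻/(1 + R⋆⁻R⁻), 1]] · [[1, R⁺ − R⁻],[0, 1]] · [[1, 0],[−R⋆⁺/(1 + R⋆⁺R⁺), 1]]
  = [[0, R⁺ − R⁻],[1/(R⁻ − R⁺), 0]]` (jump formula (4.35)). -/
theorem jump_formula_on_band (Rp Rm Rsp Rsm : ℂ)
    (h1 : 1 + Rp * Rsm = 0) (h2 : 1 + Rm * Rsp = 0)
    (h3 : 1 + Rsp * Rp ≠ 0) (h4 : 1 + Rsm * Rm ≠ 0) :
    Rp ≠ Rm ∧
      !![1, 0; Rsm / (1 + Rsm * Rm), 1]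
          * !![1, Rp - Rm; 0, 1]
          * !![1, 0; -Rsp / (1 + Rsp * Rp), 1]
        = !![0, Rp - Rm; 1 / (Rm - Rp), 0] := by
  have hsub : Rm - Rp ≠ 0 := sub_ne_zero_of_one_add_mul_eq_zero h2 h3
  have ha : Rsm / (1 + Rsm * Rm) = 1 / (Rm - Rp) := div_one_add_mul_eq_one_div_sub h1 h4
  have hb : -Rsp / (1 + Rsp * Rp) = 1 / (Rm - Rp) := by
    rw [neg_div, div_one_add_mul_eq_one_div_sub h2 h3, ← one_div_neg_eq_neg_one_div, neg_sub]
  have hd : 1 / (Rm - Rp) * (Rp - Rm) = -1 := by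
    rw [one_div_mul_eq_div, ← neg_sub, neg_div_self hsub]
  refine ⟨fun h => hsub (sub_eq_zero.mpr h.symm), ?_⟩
  rw [ha, hb]
  exact lowerUnitriangular_mul_upper_mul_lower_eq hd hd
end

section
/- Let L > 0, ξ ∈ ℂ, and let a, a⋆, b, b⋆ : ℂ → ℂ be continuous at ξ. Let R be a complex-valued function defined on a punctured neighborhood of ξ such that |R(z)| → ∞ as z → ξ, and suppose that e^{2izL}·b⋆(z)·R(z)² + (e^{2izL}·a⋆(z) − a(z))·R(z) + b(z) = 0 for all z in that punctured neighborhood. Then (i) b⋆(ξ) = 0; (ii) b⋆(z)·R(z) → e^{−2iξL}·a(ξ) − a⋆(ξ) as z → ξ; and (iii) a⋆(z) + b⋆(z)·R(z) → e^{−2iξL}·a(ξ) as z → ξ. -/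
/-! Dividing the quadratic by `R` gives `e b⋆ R = a - e a⋆ - b / R` with `e z = exp (2 i z L)`,
and `b / R → 0` at the pole; so `b⋆ R` converges, and then `b⋆ = (b⋆ R) R⁻¹ → 0`. -/

open Filter Topology

section

variable {α 𝕜 : Type*} [NormedField 𝕜] {l : Filter α} {R : α → 𝕜}

theorem Filter.Tendsto.inv_of_norm_atTop (hR : Tendsto (fun x => ‖R x‖) l atTop) :
    Tendsto (fun x => (R x)⁻¹) l (𝓝 0) :=
  tendsto_inv₀_cobounded.comp (tendsto_norm_atTop_iff_cobounded.mp hR)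

theorem eventually_ne_zero_of_tendsto_norm_atTop (hR : Tendsto (fun x => ‖R x‖) l atTop) :
    ∀ᶠ x in l, R x ≠ 0 := by
  filter_upwards [hR.eventually_gt_atTop 0] with x hx
  exact norm_pos_iff.mp hx

theorem tendsto_mul_of_quadratic_eq_zero {p q r : α → 𝕜} {q₀ r₀ : 𝕜}
    (hR : Tendsto (fun x => ‖R x‖) l atTop) (hq : Tendsto q l (𝓝 q₀))
    (hr : Tendsto r l (𝓝 r₀)) (hquad : ∀ᶠ x in l, p x * R x ^ 2 + q x * R x + r x = 0) :
    Tendsto (fun x => p x * R x) l (𝓝 (-q₀)) := by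
  have hlim : Tendsto (fun x => -q x - r x * (R x)⁻¹) l (𝓝 (-q₀)) := by
    simpa using hq.neg.sub (hr.mul hR.inv_of_norm_atTop)
  refine hlim.congr' ?_
  filter_upwards [hquad, eventually_ne_zero_of_tendsto_norm_atTop hR] with x hx hRx
  symm
  field_simp
  linear_combination hx

theorem eq_zero_of_tendsto_mul_of_tendsto_norm_atTop [l.NeBot] {p : α → 𝕜} {p₀ c : 𝕜}
    (hR : Tendsto (fun x => ‖R x‖) l atTop) (hp : Tendsto p l (𝓝 p₀))
    (hpR : Tendsto (fun x => p x * R x) l (𝓝 c)) : p₀ = 0 := by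
  have hlim : Tendsto (fun x => p x * R x * (R x)⁻¹) l (𝓝 0) := by
    simpa using hpR.mul hR.inv_of_norm_atTop
  refine tendsto_nhds_unique hp (hlim.congr' ?_)
  filter_upwards [eventually_ne_zero_of_tendsto_norm_atTop hR] with x hRx
  field_simp

end

theorem pole_relations_general (L : ℝ) (ξ : ℂ) (a as b bs R : ℂ → ℂ)
    (ha : ContinuousAt a ξ) (has : ContinuousAt as ξ)
    (hb : ContinuousAt b ξ) (hbs : ContinuousAt bs ξ)
    (hRtends : Tendsto (fun z => ‖R z‖) (𝓝[≠] ξ) atTop)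
    (hquad : ∀ᶠ z in 𝓝[≠] ξ,
      Complex.exp (2 * Complex.I * z * (L : ℂ)) * bs z * R z ^ 2
        + (Complex.exp (2 * Complex.I * z * (L : ℂ)) * as z - a z) * R z + b z = 0) :
    bs ξ = 0
    ∧ Tendsto (fun z => bs z * R z) (𝓝[≠] ξ)
        (𝓝 (Complex.exp (-2 * Complex.I * ξ * (L : ℂ)) * a ξ - as ξ))
    ∧ Tendsto (fun z => as z + bs z * R z) (𝓝[≠] ξ)
        (𝓝 (Complex.exp (-2 * Complex.I * ξ * (L : ℂ)) * a ξ)) := by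
  set e : ℂ → ℂ := fun z => Complex.exp (2 * Complex.I * z * (L : ℂ))
  set e' : ℂ → ℂ := fun z => Complex.exp (-2 * Complex.I * z * (L : ℂ))
  have he_mul : ∀ z, e' z * e z = 1 := fun z => by
    simp only [e, e', ← Complex.exp_add]
    ring_nf
    exact Complex.exp_zero
  have hebsR : Tendsto (fun z => e z * bs z * R z) (𝓝[≠] ξ) (𝓝 (-(e ξ * as ξ - a ξ))) :=
    tendsto_mul_of_quadratic_eq_zero hRtends
      (((by fun_prop : ContinuousAt e ξ).mul has).sub ha).continuousWithinAt
      hb.continuousWithinAt hquad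
  have hbsR : Tendsto (fun z => bs z * R z) (𝓝[≠] ξ) (𝓝 (e' ξ * a ξ - as ξ)) := by
    have := (by fun_prop : ContinuousAt e' ξ).continuousWithinAt.tendsto.mul hebsR
    convert this using 1
    · funext z
      linear_combination (-(bs z * R z)) * he_mul z
    · congr 1
      linear_combination as ξ * he_mul ξ
  refine ⟨eq_zero_of_tendsto_mul_of_tendsto_norm_atTop hRtends hbs.continuousWithinAt hbsR,
    hbsR, ?_⟩
  convert has.continuousWithinAt.tendsto.add hbsR using 2
  ring

/-- Pole relations (4.20)–(4.21): if `|R(z)| → ∞` as `z → ξ` and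
`e^{2izL}b⋆R² + (e^{2izL}a⋆ − a)R + b = 0` near `ξ`, then `b⋆(ξ) = 0`,
`b⋆R → e^{−2iξL}a(ξ) − a⋆(ξ)`, and `a⋆ + b⋆R → e^{−2iξL}a(ξ)` as `z → ξ`. -/
theorem pole_relations (L : ℝ) (hL : 0 < L) (ξ : ℂ) (a as b bs R : ℂ → ℂ)
    (ha : ContinuousAt a ξ) (has : ContinuousAt as ξ)
    (hb : ContinuousAt b ξ) (hbs : ContinuousAt bs ξ)
    (hRtends : Tendsto (fun z => ‖R z‖) (𝓝[≠] ξ) atTop)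
    (hquad : ∀ᶠ z in 𝓝[≠] ξ,
      Complex.exp (2 * Complex.I * z * (L : ℂ)) * bs z * R z ^ 2
        + (Complex.exp (2 * Complex.I * z * (L : ℂ)) * as z - a z) * R z + b z = 0) :
    bs ξ = 0
    ∧ Tendsto (fun z => bs z * R z) (𝓝[≠] ξ)
        (𝓝 (Complex.exp (-2 * Complex.I * ξ * (L : ℂ)) * a ξ - as ξ))
    ∧ Tendsto (fun z => as z + bs z * R z) (𝓝[≠] ξ)
        (𝓝 (Complex.exp (-2 * Complex.I * ξ * (L : ℂ)) * a ξ)) :=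
  pole_relations_general L ξ a as b bs R ha has hb hbs hRtends hquad
end

section
/- Let z₀, z₁, μ ∈ ℂ, q ∈ ℂ with q ≠ 0, and a₁, a₀ ∈ ℝ, and suppose that the polynomial identity (X² + a₁X + a₀)² = (X − z₀)(X − conj z₀)(X − z₁)(X − conj z₁) − |q|²·(X − μ)(X − conj μ) holds in ℂ[X]. Then: a₁ = −(Re z₀ + Re z₁); a₀ = (1/2)·(−(Re z₀ + Re z₁)² + |z₀|² + |z₁|² + 4·Re z₀·Re z₁ − |q|²); Re μ = (a₁·a₀ + Re z₁·|z₀|² + Re z₀·|z₁|²)/|q|²; and (Im μ)² = (|z₀|²·|z₁|² − a₀²)/|q|² − (Re μ)². -/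
open Polynomial

/-!
Both sides of the identity are monic quartics with real coefficients: each factor
`(X - z)(X - conj z)` is the real quadratic `X² - 2 Re z X + |z|²`. Comparing the coefficients
of `X³`, `X²`, `X`, `1` gives four real equations; the first two determine `a₁` and `a₀`, and,
since `|q|² ≠ 0`, the last two determine `Re μ` and `|μ|² = (Re μ)² + (Im μ)²`.
-/

section CoeffComparison

variable {R : Type*} [CommRing R]

theorem quartic_coeff_eq_of_eq {a₃ a₂ a₁ a₀ b₃ b₂ b₁ b₀ : R}
    (h : X ^ 4 + C a₃ * X ^ 3 + C a₂ * X ^ 2 + C a₁ * X + C a₀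
      = X ^ 4 + C b₃ * X ^ 3 + C b₂ * X ^ 2 + C b₁ * X + C b₀) :
    a₃ = b₃ ∧ a₂ = b₂ ∧ a₁ = b₁ ∧ a₀ = b₀ := by
  have hc (n : ℕ) := congrArg (coeff · n) h
  exact ⟨by simpa using hc 3, by simpa using hc 2, by simpa using hc 1, by simpa using hc 0⟩

theorem coeff_eq_of_sq_eq_mul_sub_C_mul {a₁ a₀ b₁ b₀ c₁ c₀ k d₁ d₀ : R}
    (h : (X ^ 2 + C a₁ * X + C a₀) ^ 2
      = (X ^ 2 + C b₁ * X + C b₀) * (X ^ 2 + C c₁ * X + C c₀)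
        - C k * (X ^ 2 + C d₁ * X + C d₀)) :
    2 * a₁ = b₁ + c₁ ∧ a₁ ^ 2 + 2 * a₀ = b₀ + c₀ + b₁ * c₁ - k
      ∧ 2 * a₁ * a₀ = b₁ * c₀ + c₁ * b₀ - k * d₁ ∧ a₀ ^ 2 = b₀ * c₀ - k * d₀ := by
  apply quartic_coeff_eq_of_eq
  calc _ = (X ^ 2 + C a₁ * X + C a₀) ^ 2 := by
          simp only [map_add, map_mul, map_pow, map_ofNat]; ring
    _ = _ := h
    _ = _ := by simp only [map_add, map_sub, map_mul]; ring

end CoeffComparison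

theorem Complex.X_sub_C_mul_X_sub_C_conj (z : ℂ) :
    (X - C z) * (X - C (starRingEnd ℂ z))
      = (X ^ 2 + C (-(2 * z.re)) * X + C (‖z‖ ^ 2)).map Complex.ofRealHom := by
  have hsum : z + starRingEnd ℂ z = (2 * z.re : ℝ) := Complex.add_conj z
  have hprod : z * starRingEnd ℂ z = (‖z‖ ^ 2 : ℝ) := by
    rw [Complex.mul_conj, Complex.sq_norm]
  simp only [Polynomial.map_add, Polynomial.map_mul, Polynomial.map_pow, map_X, map_C,
    Complex.ofRealHom_eq_coe, Complex.ofReal_neg]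
  rw [← hsum, ← hprod, map_neg, map_add, map_mul]
  ring

/-- The genus-1 coefficient formulas (6.2): the polynomial identity
`(X² + a₁X + a₀)² = (X − z₀)(X − conj z₀)(X − z₁)(X − conj z₁) − |q|²(X − μ)(X − conj μ)`
determines `a₁`, `a₀`, `Re μ`, and `(Im μ)²` in terms of `z₀`, `z₁`, `q`. -/
theorem genus_one_coefficient_formulas (z₀ z₁ μ : ℂ) (q : ℂ) (hq : q ≠ 0) (a₁ a₀ : ℝ)
    (hpoly : (X ^ 2 + C (a₁ : ℂ) * X + C (a₀ : ℂ)) ^ 2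
      = (X - C z₀) * (X - C (starRingEnd ℂ z₀)) * (X - C z₁) * (X - C (starRingEnd ℂ z₁))
        - C ((‖q‖ : ℂ) ^ 2) * ((X - C μ) * (X - C (starRingEnd ℂ μ)))) :
    a₁ = -(z₀.re + z₁.re)
    ∧ a₀ = (1 / 2) * (-(z₀.re + z₁.re) ^ 2 + ‖z₀‖ ^ 2 + ‖z₁‖ ^ 2
        + 4 * z₀.re * z₁.re - ‖q‖ ^ 2)
    ∧ μ.re = (a₁ * a₀ + z₁.re * ‖z₀‖ ^ 2 + z₀.re * ‖z₁‖ ^ 2)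
        / ‖q‖ ^ 2
    ∧ μ.im ^ 2 = (‖z₀‖ ^ 2 * ‖z₁‖ ^ 2 - a₀ ^ 2) / ‖q‖ ^ 2
        - μ.re ^ 2 := by
  have hQ : ‖q‖ ^ 2 ≠ 0 := by positivity
  have hreal : (X ^ 2 + C a₁ * X + C a₀) ^ 2
      = (X ^ 2 + C (-(2 * z₀.re)) * X + C (‖z₀‖ ^ 2))
          * (X ^ 2 + C (-(2 * z₁.re)) * X + C (‖z₁‖ ^ 2))
        - C (‖q‖ ^ 2) * (X ^ 2 + C (-(2 * μ.re)) * X + C (‖μ‖ ^ 2)) := by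
    apply Polynomial.map_injective Complex.ofRealHom Complex.ofReal_injective
    rw [mul_assoc _ (X - C z₁), Complex.X_sub_C_mul_X_sub_C_conj,
      Complex.X_sub_C_mul_X_sub_C_conj, Complex.X_sub_C_mul_X_sub_C_conj] at hpoly
    simpa using hpoly
  obtain ⟨h₃, h₂, h₁, h₀⟩ := coeff_eq_of_sq_eq_mul_sub_C_mul hreal
  have hμ : ‖μ‖ ^ 2 = μ.re ^ 2 + μ.im ^ 2 := by
    rw [Complex.sq_norm, Complex.normSq_apply]; ring
  have ha₁ : a₁ = -(z₀.re + z₁.re) := by linarith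
  refine ⟨ha₁, ?_, ?_, ?_⟩
  · subst ha₁; linear_combination h₂ / 2
  · field_simp; linear_combination -h₁ / 2
  · rw [hμ] at h₀; field_simp; linear_combination h₀
end
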